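/- Let c_v > 1/2, ρ₋, ρ₊ > 0 and 0 < p₋ < p₊, and set W := 2c_v(p₊−p₋)²/((2c_v+1)p₊ + p₋). Then there exists η ∈ (0, W) such that for every v₋ > 0 with W − η < ρ₋v₋² < W the following holds: with ρ_K := ρ₋(p₊−p₋)/(p₊−p₋−ρ₋v₋²), there exists δ > 0 with ρ_K − δ > ρ₋ such that for all ρ₁ ∈ (ρ_K−δ, ρ_K) and ρ₂ ∈ (ρ_K, ρ_K+δ), setting β := (ρ₋(ρ₂−ρ₁)v₋)/(ρ₁(ρ₂−ρ₋)) − √((ρ₂−ρ₁)(ρ₁−ρ₋)[(ρ₂−ρ₋)(p₊−p₋)−ρ₋ρ₂v₋²])/(ρ₁(ρ₂−ρ₋)), p₁ := p₋(ρ₁/ρ₋)^{(c_v+1)/c_v}, p₂ := p₋(ρ₂/ρ₋)^{(c_v+1)/c_v}, one has ε̃₁ > 0 and ε̃₂ > 0, where ε̃₁ := v₋² − β² − 2c_v(p₁/ρ₁ − p₋/ρ₋) − 2(ρ₁−ρ₋)(p₁β−p₋v₋)/(ρ₋ρ₁(v₋−β)) + (p₁−p₋)/ρ₁ − ρ₋(v₋−β)²/(ρ₁−ρ₋)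 and ε̃₂ := v₋² − 2c_v(p₂/ρ₂ − p₋/ρ₋) − 2(ρ₁−ρ₋)(p₁β−p₋v₋)/(ρ₋ρ₁(v₋−β)) + (p₂−p₊)/ρ₂ + 2(ρ₂−ρ₁)p₁/(ρ₁ρ₂). -/

import Mathlib

/-- The second velocity component `β` of the subsolution in region `Ω₁`. -/
noncomputable def betaDef (ρm pm pp vm ρ1 ρ2 : ℝ) : ℝ :=
  ρm * (ρ2 - ρ1) * vm / (ρ1 * (ρ2 - ρm))
    - Real.sqrt ((ρ2 - ρ1) * (ρ1 - ρm)
        * ((ρ2 - ρm) * (pp - pm) - ρm * ρ2 * vm ^ 2)) / (ρ1 * (ρ2 - ρm))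

/-- The pressure of the subsolution, chosen so that the entropy is constant. -/
noncomputable def pressureDef (cv ρm pm ρ : ℝ) : ℝ := pm * (ρ / ρm) ^ ((cv + 1) / cv)

/-- The quantity `ε̃₁` of the particular fan subsolution. -/
noncomputable def eps1tilde (cv ρm pm pp vm ρ1 ρ2 : ℝ) : ℝ :=
  vm ^ 2 - betaDef ρm pm pp vm ρ1 ρ2 ^ 2
    - 2 * cv * (pressureDef cv ρm pm ρ1 / ρ1 - pm / ρm)
    - 2 * ((ρ1 - ρm) * (pressureDef cv ρm pm ρ1 * betaDef ρm pm pp vm ρ1 ρ2 - pm * vm))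
        / (ρm * ρ1 * (vm - betaDef ρm pm pp vm ρ1 ρ2))
    + (pressureDef cv ρm pm ρ1 - pm) / ρ1
    - ρm * (vm - betaDef ρm pm pp vm ρ1 ρ2) ^ 2 / (ρ1 - ρm)

/-- The quantity `ε̃₂` of the particular fan subsolution. -/
noncomputable def eps2tilde (cv ρm pm pp vm ρ1 ρ2 : ℝ) : ℝ :=
  vm ^ 2 - 2 * cv * (pressureDef cv ρm pm ρ2 / ρ2 - pm / ρm)
    - 2 * ((ρ1 - ρm) * (pressureDef cv ρm pm ρ1 * betaDef ρm pm pp vm ρ1 ρ2 - pm * vm))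
        / (ρm * ρ1 * (vm - betaDef ρm pm pp vm ρ1 ρ2))
    + (pressureDef cv ρm pm ρ2 - pp) / ρ2
    + 2 * (ρ2 - ρ1) * pressureDef cv ρm pm ρ1 / (ρ1 * ρ2)

/-! At the limiting point `ρ₋v₋² = W`, `ρ₁ = ρ₂ = ρ_K` one has `β = 0`, and the relation defining
`ρ_K` makes `ε̃₁ = ε̃₂`; inserting the value of `W`, both equal a positive multiple of
`(2c_v - 1)(p₊ - p(ρ_K))`. With `a = 2c_v + 1` and `r = p₊/p₋` we get `ρ_K/ρ₋ = (ar + 1)/(a + r)`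
and `(c_v + 1)/c_v = (a + 1)/(a - 1)`, so `p(ρ_K) < p₊` is the inequality
`((ar + 1)/(a + r))^((a+1)/(a-1)) < r` for `r > 1`, proved by differentiating its logarithm.
All quantities are continuous near that point, so positivity persists for `ρ₋v₋²` slightly below
`W` and `ρ₁, ρ₂` close to `ρ_K`. -/

open Filter Topology

lemma log_mobius_lt {a : ℝ} (ha : 1 < a) {r : ℝ} (hr : 1 < r) :
    (a + 1) * (Real.log (a * r + 1) - Real.log (a + r)) < (a - 1) * Real.log r := by
  set φ : ℝ → ℝ := fun x =>
    (a + 1) * (Real.log (a * x + 1) - Real.log (a + x)) - (a - 1) * Real.log x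
  have hderiv : ∀ x, 0 < x →
      HasDerivAt φ (-((a - 1) * a * (x - 1) ^ 2) / (x * (a * x + 1) * (a + x))) x := by
    intro x hx
    have hP : 0 < a * x + 1 := by positivity
    have hQ : 0 < a + x := by positivity
    have hnum : HasDerivAt (fun y => Real.log (a * y + 1)) (a / (a * x + 1)) x := by
      simpa using (((hasDerivAt_id x).const_mul a).add_const 1).log hP.ne'
    have hden : HasDerivAt (fun y => Real.log (a + y)) (1 / (a + x)) x := by
      simpa using ((hasDerivAt_id x).const_add a).log hQ.ne'
    refine (((hnum.sub hden).const_mul (a + 1)).sub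
      ((Real.hasDerivAt_log hx.ne').const_mul (a - 1))).congr_deriv ?_
    field_simp
    ring
  have hanti : StrictAntiOn φ (Set.Ici 1) := by
    refine strictAntiOn_of_deriv_neg (convex_Ici 1)
      (fun x hx => (hderiv x (by simp at hx; linarith)).continuousAt.continuousWithinAt) ?_
    intro x hx
    rw [interior_Ici, Set.mem_Ioi] at hx
    rw [(hderiv x (by linarith)).deriv, neg_div, neg_neg_iff_pos]
    have : 0 < x - 1 := sub_pos.2 hx
    have : 0 < a - 1 := sub_pos.2 ha
    positivity
  have h := hanti Set.self_mem_Ici hr.le hr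
  simp only [φ, mul_one, Real.log_one, add_comm a 1, sub_self, mul_zero] at h
  linarith

lemma mobius_rpow_lt {a : ℝ} (ha : 1 < a) {r : ℝ} (hr : 1 < r) :
    ((a * r + 1) / (a + r)) ^ ((a + 1) / (a - 1)) < r := by
  have hP : 0 < a * r + 1 := by positivity
  have hQ : 0 < a + r := by positivity
  have hbase : 0 < (a * r + 1) / (a + r) := div_pos hP hQ
  rw [← Real.log_lt_log_iff (Real.rpow_pos_of_pos hbase _) (by positivity),
    Real.log_rpow hbase, Real.log_div hP.ne' hQ.ne', div_mul_eq_mul_div,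
    div_lt_iff₀ (sub_pos.2 ha), mul_comm (Real.log r)]
  exact log_mobius_lt ha hr

/-- The paper's `W`. -/
noncomputable def critW (cv pm pp : ℝ) : ℝ := 2 * cv * (pp - pm) ^ 2 / ((2 * cv + 1) * pp + pm)

/-- `ρ_K` as a function of `t = ρ₋v₋²`. -/
noncomputable def rhoK (ρm pm pp t : ℝ) : ℝ := ρm * (pp - pm) / (pp - pm - t)

section

variable {cv ρm pm pp : ℝ}

lemma sub_critW (hcv : 0 < cv) (hpm : 0 < pm) (hpmp : pm < pp) :
    pp - pm - critW cv pm pp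
      = (pp - pm) * (pp + (2 * cv + 1) * pm) / ((2 * cv + 1) * pp + pm) := by
  have hB : 0 < (2 * cv + 1) * pp + pm := by nlinarith
  rw [eq_div_iff hB.ne', critW, sub_mul, sub_mul, div_mul_cancel₀ _ hB.ne']
  ring

lemma critW_pos (hcv : 0 < cv) (hpm : 0 < pm) (hpmp : pm < pp) : 0 < critW cv pm pp := by
  have hB : 0 < (2 * cv + 1) * pp + pm := by nlinarith
  have := sub_pos.2 hpmp
  exact div_pos (by positivity) hB

lemma critW_lt (hcv : 0 < cv) (hpm : 0 < pm) (hpmp : pm < pp) : critW cv pm pp < pp - pm := by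
  have hB : 0 < (2 * cv + 1) * pp + pm := by nlinarith
  have hA : 0 < pp + (2 * cv + 1) * pm := by nlinarith
  have := sub_pos.2 hpmp
  have := sub_critW hcv hpm hpmp
  have : 0 < (pp - pm) * (pp + (2 * cv + 1) * pm) / ((2 * cv + 1) * pp + pm) := by positivity
  linarith

lemma lt_rhoK (hρm : 0 < ρm) {t : ℝ} (ht : 0 < t) (htp : t < pp - pm) : ρm < rhoK ρm pm pp t := by
  rw [rhoK, lt_div_iff₀ (sub_pos.2 htp)]
  nlinarith

lemma rhoK_critW (hcv : 0 < cv) (hpm : 0 < pm) (hpmp : pm < pp) :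
    rhoK ρm pm pp (critW cv pm pp) = ρm * ((2 * cv + 1) * pp + pm) / (pp + (2 * cv + 1) * pm) := by
  have hB : 0 < (2 * cv + 1) * pp + pm := by nlinarith
  have hA : 0 < pp + (2 * cv + 1) * pm := by nlinarith
  have := sub_pos.2 hpmp
  rw [rhoK, sub_critW hcv hpm hpmp]
  field_simp

lemma pressureDef_rhoK_critW_lt (hcv : 0 < cv) (hρm : ρm ≠ 0) (hpm : 0 < pm) (hpmp : pm < pp) :
    pressureDef cv ρm pm (rhoK ρm pm pp (critW cv pm pp)) < pp := by
  have hK : rhoK ρm pm pp (critW cv pm pp) / ρm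
      = ((2 * cv + 1) * (pp / pm) + 1) / (2 * cv + 1 + pp / pm) := by
    rw [rhoK_critW hcv hpm hpmp]
    field_simp
    ring
  have hexp : (cv + 1) / cv = (2 * cv + 1 + 1) / (2 * cv + 1 - 1) := by
    field_simp
    ring
  calc pressureDef cv ρm pm (rhoK ρm pm pp (critW cv pm pp))
      = pm * (((2 * cv + 1) * (pp / pm) + 1) / (2 * cv + 1 + pp / pm))
          ^ ((2 * cv + 1 + 1) / (2 * cv + 1 - 1)) := by rw [pressureDef, hK, hexp]
    _ < pm * (pp / pm) := by
      gcongr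
      exact mobius_rpow_lt (by linarith) ((one_lt_div hpm).2 hpmp)
    _ = pp := mul_div_cancel₀ _ hpm.ne'

@[simp]
lemma betaDef_self (v ρ : ℝ) : betaDef ρm pm pp v ρ ρ = 0 := by
  simp [betaDef]

lemma eps2tilde_self {v ρ : ℝ} (hρm : ρm ≠ 0) (hv : v ≠ 0) (hρ : ρ ≠ 0) :
    eps2tilde cv ρm pm pp v ρ ρ = v ^ 2 + 2 * (cv + 1) * pm / ρm
      - (2 * pm + (2 * cv - 1) * pressureDef cv ρm pm ρ + pp) / ρ := by
  rw [eps2tilde, betaDef_self]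
  field_simp
  ring

lemma eps1tilde_rhoK_self {v : ℝ} (hρm : ρm ≠ 0) (hv : v ≠ 0) (hp : pp - pm ≠ 0)
    (hD : pp - pm - ρm * v ^ 2 ≠ 0) :
    eps1tilde cv ρm pm pp v (rhoK ρm pm pp (ρm * v ^ 2)) (rhoK ρm pm pp (ρm * v ^ 2))
      = eps2tilde cv ρm pm pp v (rhoK ρm pm pp (ρm * v ^ 2)) (rhoK ρm pm pp (ρm * v ^ 2)) := by
  have hK : rhoK ρm pm pp (ρm * v ^ 2) - ρm = ρm ^ 2 * v ^ 2 / (pp - pm - ρm * v ^ 2) := by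
    rw [rhoK]
    field_simp
    ring
  have hK0 : rhoK ρm pm pp (ρm * v ^ 2) ≠ 0 := by
    rw [rhoK]
    positivity
  rw [eps1tilde, eps2tilde, betaDef_self, hK]
  rw [rhoK] at hK0 ⊢
  field_simp
  ring

lemma continuousAt_eps1tilde {x : ℝ × ℝ × ℝ} (hρm : ρm ≠ 0) (h1 : x.2.1 ≠ 0)
    (h1m : x.2.1 - ρm ≠ 0) (h2m : x.2.2 - ρm ≠ 0)
    (hvb : x.1 - betaDef ρm pm pp x.1 x.2.1 x.2.2 ≠ 0) :
    ContinuousAt (fun q : ℝ × ℝ × ℝ => eps1tilde cv ρm pm pp q.1 q.2.1 q.2.2) x := by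
  unfold eps1tilde betaDef pressureDef at *
  fun_prop (disch := first | assumption | simp [*])

lemma continuousAt_eps2tilde {x : ℝ × ℝ × ℝ} (hρm : ρm ≠ 0) (h1 : x.2.1 ≠ 0) (h2 : x.2.2 ≠ 0)
    (h2m : x.2.2 - ρm ≠ 0) (hvb : x.1 - betaDef ρm pm pp x.1 x.2.1 x.2.2 ≠ 0) :
    ContinuousAt (fun q : ℝ × ℝ × ℝ => eps2tilde cv ρm pm pp q.1 q.2.1 q.2.2) x := by
  unfold eps2tilde betaDef pressureDef at *
  fun_prop (disch := first | assumption | simp [*])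

lemma eps2tilde_critW_pos (hcv : 1 / 2 < cv) (hρm : 0 < ρm) (hpm : 0 < pm) (hpmp : pm < pp) :
    0 < eps2tilde cv ρm pm pp (√(critW cv pm pp / ρm)) (rhoK ρm pm pp (critW cv pm pp))
      (rhoK ρm pm pp (critW cv pm pp)) := by
  have hcv0 : 0 < cv := by linarith
  have hW := critW_pos hcv0 hpm hpmp
  have hB : 0 < (2 * cv + 1) * pp + pm := by nlinarith
  have hA : 0 < pp + (2 * cv + 1) * pm := by nlinarith
  have hK : 0 < rhoK ρm pm pp (critW cv pm pp) :=
    hρm.trans (lt_rhoK hρm hW (critW_lt hcv0 hpm hpmp))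
  have hP := pressureDef_rhoK_critW_lt hcv0 hρm.ne' hpm hpmp
  have hWB : critW cv pm pp * ((2 * cv + 1) * pp + pm) = 2 * cv * (pp - pm) ^ 2 :=
    div_mul_cancel₀ _ hB.ne'
  rw [eps2tilde_self hρm.ne' (Real.sqrt_pos.2 (div_pos hW hρm)).ne' hK.ne',
    Real.sq_sqrt (div_pos hW hρm).le]
  generalize pressureDef cv ρm pm (rhoK ρm pm pp (critW cv pm pp)) = P at hP ⊢
  have key : critW cv pm pp / ρm + 2 * (cv + 1) * pm / ρm
      - (2 * pm + (2 * cv - 1) * P + pp) / rhoK ρm pm pp (critW cv pm pp)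
      = (pp + (2 * cv + 1) * pm) * (2 * cv - 1) * (pp - P) / (((2 * cv + 1) * pp + pm) * ρm) := by
    rw [rhoK_critW hcv0 hpm hpmp]
    set B := (2 * cv + 1) * pp + pm
    set A := pp + (2 * cv + 1) * pm
    field_simp
    simp only [A, B] at hWB ⊢
    linear_combination hWB
  rw [key]
  have : 0 < 2 * cv - 1 := by linarith
  have : 0 < pp - P := by linarith
  positivity

lemma eventually_eps1tilde_pos_and_eps2tilde_pos (hcv : 1 / 2 < cv) (hρm : 0 < ρm) (hpm : 0 < pm) (hpmp : pm < pp) :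
    ∀ᶠ q : ℝ × ℝ × ℝ in 𝓝 (critW cv pm pp, 0, 0),
      0 < eps1tilde cv ρm pm pp (√(q.1 / ρm)) (rhoK ρm pm pp q.1 + q.2.1)
        (rhoK ρm pm pp q.1 + q.2.2) ∧
      0 < eps2tilde cv ρm pm pp (√(q.1 / ρm)) (rhoK ρm pm pp q.1 + q.2.1)
        (rhoK ρm pm pp q.1 + q.2.2) := by
  have hcv0 : 0 < cv := by linarith
  set W := critW cv pm pp
  set v₀ := √(W / ρm)
  set K₀ := rhoK ρm pm pp W
  have hW : 0 < W := critW_pos hcv0 hpm hpmp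
  have hWp : W < pp - pm := critW_lt hcv0 hpm hpmp
  have hv₀ : 0 < v₀ := Real.sqrt_pos.2 (div_pos hW hρm)
  have hρv₀ : ρm * v₀ ^ 2 = W := by
    rw [Real.sq_sqrt (div_pos hW hρm).le]
    field_simp
  have hK₀ : ρm < K₀ := lt_rhoK hρm hW hWp
  have hpos₂ := eps2tilde_critW_pos hcv hρm hpm hpmp
  have hpos₁ : 0 < eps1tilde cv ρm pm pp v₀ K₀ K₀ := by
    have h := eps1tilde_rhoK_self (cv := cv) hρm.ne' hv₀.ne' (sub_pos.2 hpmp).ne'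
      (by rw [hρv₀]; exact (sub_pos.2 hWp).ne')
    rw [hρv₀] at h
    rwa [h]
  have hg : Tendsto (fun q : ℝ × ℝ × ℝ =>
      (√(q.1 / ρm), rhoK ρm pm pp q.1 + q.2.1, rhoK ρm pm pp q.1 + q.2.2)) (𝓝 (W, 0, 0))
      (𝓝 (v₀, K₀, K₀)) := by
    have hD : pp - pm - W ≠ 0 := (sub_pos.2 hWp).ne'
    have h : ContinuousAt (fun q : ℝ × ℝ × ℝ =>
        (√(q.1 / ρm), rhoK ρm pm pp q.1 + q.2.1, rhoK ρm pm pp q.1 + q.2.2)) (W, 0, 0) := by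
      unfold rhoK
      fun_prop (disch := assumption)
    simpa only [add_zero] using h.tendsto
  have hK₀ne : K₀ ≠ 0 := (hρm.trans hK₀).ne'
  have hK₀m : K₀ - ρm ≠ 0 := (sub_pos.2 hK₀).ne'
  have hvβ : v₀ - betaDef ρm pm pp v₀ K₀ K₀ ≠ 0 := by simpa using hv₀.ne'
  exact (hg.eventually ((continuousAt_eps1tilde (x := (v₀, K₀, K₀)) hρm.ne' hK₀ne hK₀m hK₀m hvβ)
    |>.eventually (eventually_gt_nhds hpos₁))).and
    (hg.eventually ((continuousAt_eps2tilde (x := (v₀, K₀, K₀)) hρm.ne' hK₀ne hK₀ne hK₀m hvβ)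
    |>.eventually (eventually_gt_nhds hpos₂)))

end

theorem subsolution_condition_part2_general
    (cv ρm pm pp : ℝ)
    (hcv : 1 / 2 < cv) (hρm : 0 < ρm) (hpm : 0 < pm) (hpmp : pm < pp) :
    ∃ η : ℝ, 0 < η ∧ η < 2 * cv * (pp - pm) ^ 2 / ((2 * cv + 1) * pp + pm) ∧
      ∀ vm : ℝ, 0 < vm →
        2 * cv * (pp - pm) ^ 2 / ((2 * cv + 1) * pp + pm) - η < ρm * vm ^ 2 →
        ρm * vm ^ 2 < 2 * cv * (pp - pm) ^ 2 / ((2 * cv + 1) * pp + pm) →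
        ∃ δ : ℝ, 0 < δ ∧
          ρm < ρm * (pp - pm) / (pp - pm - ρm * vm ^ 2) - δ ∧
          ∀ ρ1 ρ2 : ℝ,
            ρm * (pp - pm) / (pp - pm - ρm * vm ^ 2) - δ < ρ1 →
            ρ1 < ρm * (pp - pm) / (pp - pm - ρm * vm ^ 2) →
            ρm * (pp - pm) / (pp - pm - ρm * vm ^ 2) < ρ2 →
            ρ2 < ρm * (pp - pm) / (pp - pm - ρm * vm ^ 2) + δ →
              0 < eps1tilde cv ρm pm pp vm ρ1 ρ2 ∧
              0 < eps2tilde cv ρm pm pp vm ρ1 ρ2 := by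
  simp only [show 2 * cv * (pp - pm) ^ 2 / ((2 * cv + 1) * pp + pm) = critW cv pm pp from rfl,
    show ∀ t, ρm * (pp - pm) / (pp - pm - t) = rhoK ρm pm pp t from fun _ => rfl]
  have hcv0 : 0 < cv := by linarith
  have hW := critW_pos hcv0 hpm hpmp
  obtain ⟨r, hr, hball⟩ :=
    Metric.eventually_nhds_iff.1 (eventually_eps1tilde_pos_and_eps2tilde_pos hcv hρm hpm hpmp)
  refine ⟨min r (critW cv pm pp / 2), by positivity,
    by linarith [min_le_right r (critW cv pm pp / 2)], fun vm hvm hlow hhigh => ?_⟩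
  set K := rhoK ρm pm pp (ρm * vm ^ 2)
  have hK : ρm < K := lt_rhoK hρm (by positivity) (hhigh.trans (critW_lt hcv0 hpm hpmp))
  refine ⟨min r ((K - ρm) / 2), lt_min hr (by linarith),
    by linarith [min_le_right r ((K - ρm) / 2)], fun ρ1 ρ2 h1 h1' h2 h2' => ?_⟩
  have hdist : dist ((ρm * vm ^ 2, ρ1 - K, ρ2 - K) : ℝ × ℝ × ℝ) (critW cv pm pp, 0, 0) < r := by
    simp only [Prod.dist_eq, Real.dist_eq, sub_zero, max_lt_iff, abs_lt]
    refine ⟨⟨?_, ?_⟩, ⟨?_, ?_⟩, ⟨?_, ?_⟩⟩ <;>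
      linarith [min_le_left r (critW cv pm pp / 2), min_le_left r ((K - ρm) / 2)]
  have h := hball hdist
  rwa [mul_div_cancel_left₀ _ hρm.ne', Real.sqrt_sq hvm.le, add_sub_cancel, add_sub_cancel] at h

/-- Subsolution condition, part 2: positivity of `ε̃₁` and `ε̃₂` if `ρ₋v₋²` is close enough to
`W = 2c_v(p₊-p₋)²/((2c_v+1)p₊+p₋)` and `ρ₁, ρ₂` are close enough to `ρ_K`
(Section 3.8 of the paper). -/
theorem subsolution_condition_part2
    (cv ρm ρp pm pp : ℝ)
    (hcv : 1 / 2 < cv) (hρm : 0 < ρm) (hρp : 0 < ρp) (hpm : 0 < pm) (hpmp : pm < pp) :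
    ∃ η : ℝ, 0 < η ∧ η < 2 * cv * (pp - pm) ^ 2 / ((2 * cv + 1) * pp + pm) ∧
      ∀ vm : ℝ, 0 < vm →
        2 * cv * (pp - pm) ^ 2 / ((2 * cv + 1) * pp + pm) - η < ρm * vm ^ 2 →
        ρm * vm ^ 2 < 2 * cv * (pp - pm) ^ 2 / ((2 * cv + 1) * pp + pm) →
        ∃ δ : ℝ, 0 < δ ∧
          ρm < ρm * (pp - pm) / (pp - pm - ρm * vm ^ 2) - δ ∧
          ∀ ρ1 ρ2 : ℝ,
            ρm * (pp - pm) / (pp - pm - ρm * vm ^ 2) - δ < ρ1 →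
            ρ1 < ρm * (pp - pm) / (pp - pm - ρm * vm ^ 2) →
            ρm * (pp - pm) / (pp - pm - ρm * vm ^ 2) < ρ2 →
            ρ2 < ρm * (pp - pm) / (pp - pm - ρm * vm ^ 2) + δ →
              0 < eps1tilde cv ρm pm pp vm ρ1 ρ2 ∧
              0 < eps2tilde cv ρm pm pp vm ρ1 ρ2 :=
  subsolution_condition_part2_general cv ρm pm pp hcv hρm hpm hpmp
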